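/- arXiv:2604.07020 — 2 statements merged into one kernel-verified Lean document; each statement's English description precedes it below -/
import Mathlib

section
/- Let s ≥ 1, let μ : Fin s → ℝ and σ : Fin s → ℝ with σ_j > 0 for all j, let P be the product measure on Fin s → ℝ whose j-th factor is the real Gaussian measure with mean μ_j and variance σ_j², and let J ⊆ Fin s be nonempty. Then the pushforward of P under the map z ↦ max_{j∈J} z_j equals Lebesgue measure on ℝ with density g, where g(v) = ∑_{j∈J} (1/σ_j) φ((v − μ_j)/σ_j) ∏_{ℓ∈J, ℓ≠j} Φ((v − μ_ℓ)/σ_ℓ), with Φ and φ the cumulative distribution function and density of the standard real Gaussian. -/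
open MeasureTheory ProbabilityTheory

/-- Standard Gaussian density `φ`. -/
noncomputable def stdGaussPDF (u : ℝ) : ℝ :=
  (Real.sqrt (2 * Real.pi))⁻¹ * Real.exp (-(u ^ 2) / 2)

/-- Standard Gaussian cumulative distribution function `Φ`. -/
noncomputable def stdGaussCDF (t : ℝ) : ℝ :=
  ∫ u in Set.Iic t, stdGaussPDF u

/-!
The maximum is `≤ t` exactly when every coordinate in `J` is, so by independence the CDF of the
maximum is the product `∏_{j ∈ J} Φ((t - μ j) / σ j)` of the marginal CDFs. By the product rule
its derivative is the claimed `g`, which is integrable, being dominated by the sum of the marginal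
densities. A probability measure on `ℝ` whose CDF is an antiderivative of an integrable function
is Lebesgue measure with that density, by the fundamental theorem of calculus on `Iic t`.
-/

open Set

section DensityFromCDF

variable {ν : Measure ℝ} {f : ℝ → ℝ}

lemma integrable_of_eq_withDensity_ofReal [IsFiniteMeasure ν] (hf : Measurable f) (hf₀ : 0 ≤ f)
    (hν : ν = volume.withDensity fun x => ENNReal.ofReal (f x)) : Integrable f := by
  refine ⟨hf.aestronglyMeasurable, ?_⟩
  rw [hasFiniteIntegral_iff_ofReal (ae_of_all _ hf₀), ← setLIntegral_univ,
    ← withDensity_apply _ MeasurableSet.univ, ← hν]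
  exact measure_lt_top ν univ

variable [IsProbabilityMeasure ν]

lemma cdf_eq_setIntegral_of_withDensity (hf : Measurable f) (hf₀ : 0 ≤ f)
    (hν : ν = volume.withDensity fun x => ENNReal.ofReal (f x)) (t : ℝ) :
    cdf ν t = ∫ x in Iic t, f x := by
  rw [cdf_eq_real, measureReal_def, hν, withDensity_apply _ measurableSet_Iic,
    ← ofReal_integral_eq_lintegral_ofReal
      (integrable_of_eq_withDensity_ofReal hf hf₀ hν).integrableOn (ae_of_all _ hf₀),
    ENNReal.toReal_ofReal (setIntegral_nonneg measurableSet_Iic fun x _ => hf₀ x)]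

lemma hasDerivAt_cdf_of_withDensity (hf : Continuous f) (hf₀ : 0 ≤ f)
    (hν : ν = volume.withDensity fun x => ENNReal.ofReal (f x)) (t : ℝ) :
    HasDerivAt (cdf ν) (f t) t := by
  have hint := integrable_of_eq_withDensity_ofReal hf.measurable hf₀ hν
  have hcdf : ⇑(cdf ν) = fun u => cdf ν 0 + ∫ x in (0 : ℝ)..u, f x := by
    funext u
    rw [← intervalIntegral.integral_Iic_sub_Iic hint.integrableOn hint.integrableOn,
      cdf_eq_setIntegral_of_withDensity hf.measurable hf₀ hν,
      cdf_eq_setIntegral_of_withDensity hf.measurable hf₀ hν]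
    ring
  rw [hcdf]
  exact (intervalIntegral.integral_hasDerivAt_right hint.intervalIntegrable
    hf.stronglyMeasurable.stronglyMeasurableAtFilter hf.continuousAt).const_add _

lemma eq_withDensity_of_hasDerivAt_cdf {g : ℝ → ℝ} (hderiv : ∀ x, HasDerivAt (cdf ν) (g x) x)
    (hg : Integrable g) : ν = volume.withDensity fun x => ENNReal.ofReal (g x) := by
  have hg₀ : 0 ≤ g := fun x => (hderiv x).nonneg_of_monotone (monotone_cdf ν)
  refine Measure.ext_of_Iic _ _ fun t => ?_
  rw [← ofReal_cdf, withDensity_apply _ measurableSet_Iic,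
    ← ofReal_integral_eq_lintegral_ofReal hg.integrableOn (ae_of_all _ hg₀),
    integral_Iic_of_hasDerivAt_of_tendsto' (fun x _ => hderiv x) hg.integrableOn
      (tendsto_cdf_atBot ν), sub_zero]

end DensityFromCDF

lemma measurable_finset_sup' {ι α : Type*} [LinearOrder α] [MeasurableSpace α] [MeasurableSup₂ α]
    (J : Finset ι) (hJ : J.Nonempty) : Measurable fun z : ι → α => J.sup' hJ z := by
  convert Finset.measurable_sup' hJ (f := fun j (z : ι → α) => z j)
    fun j _ => measurable_pi_apply j using 1
  funext z
  exact (Finset.sup'_apply hJ (fun j (z : ι → α) => z j) z).symm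

lemma map_finset_sup'_pi_apply_Iic {ι α : Type*} [Fintype ι] [LinearOrder α]
    [TopologicalSpace α] [OrderClosedTopology α] [MeasurableSpace α] [OpensMeasurableSpace α]
    [MeasurableSup₂ α] (ν : ι → Measure α) [∀ i, IsProbabilityMeasure (ν i)] (J : Finset ι)
    (hJ : J.Nonempty) (t : α) : (Measure.pi ν).map (fun z => J.sup' hJ z) (Iic t) = ∏ j ∈ J, ν j (Iic t) := by
  classical
  have hpre : (fun z : ι → α => J.sup' hJ z) ⁻¹' Iic t
      = univ.pi fun j => if j ∈ J then Iic t else univ := by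
    ext z
    simp [Finset.sup'_le_iff]
  rw [Measure.map_apply (measurable_finset_sup' J hJ) measurableSet_Iic, hpre, Measure.pi_pi]
  simp [apply_ite, Finset.prod_ite_mem]

lemma cdf_map_finset_sup'_pi {ι : Type*} [Fintype ι] (ν : ι → Measure ℝ)
    [∀ i, IsProbabilityMeasure (ν i)] (J : Finset ι) (hJ : J.Nonempty) :
    ⇑(cdf ((Measure.pi ν).map fun z => J.sup' hJ z)) = fun t => ∏ j ∈ J, cdf (ν j) t := by
  have := Measure.isProbabilityMeasure_map (μ := Measure.pi ν)
    (measurable_finset_sup' J hJ).aemeasurable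
  funext t
  simp only [cdf_eq_real, measureReal_def, map_finset_sup'_pi_apply_Iic, ENNReal.toReal_prod]

theorem map_finset_sup'_pi_eq_withDensity {ι : Type*} [Fintype ι] [DecidableEq ι]
    (ν : ι → Measure ℝ) [∀ i, IsProbabilityMeasure (ν i)]
    (f : ι → ℝ → ℝ) (hf : ∀ i, Continuous (f i)) (hf₀ : ∀ i, 0 ≤ f i)
    (hν : ∀ i, ν i = volume.withDensity fun x => ENNReal.ofReal (f i x))
    (J : Finset ι) (hJ : J.Nonempty) :
    (Measure.pi ν).map (fun z => J.sup' hJ z) = volume.withDensity fun v =>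
      ENNReal.ofReal (∑ j ∈ J, f j v * ∏ ℓ ∈ J.erase j, cdf (ν ℓ) v) := by
  have := Measure.isProbabilityMeasure_map (μ := Measure.pi ν)
    (measurable_finset_sup' J hJ).aemeasurable
  refine eq_withDensity_of_hasDerivAt_cdf (fun v => ?_) ?_
  · rw [cdf_map_finset_sup'_pi]
    refine (HasDerivAt.fun_finsetProd fun j _ =>
      hasDerivAt_cdf_of_withDensity (hf j) (hf₀ j) (hν j) v).congr_deriv ?_
    simp only [smul_eq_mul, mul_comm]
  · have hmeas : Measurable fun v => ∑ j ∈ J, f j v * ∏ ℓ ∈ J.erase j, cdf (ν ℓ) v :=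
      Finset.measurable_sum J fun j _ => (hf j).measurable.mul
        (Finset.measurable_prod _ fun ℓ _ => (monotone_cdf (ν ℓ)).measurable)
    have hdom : Integrable fun v => ∑ j ∈ J, f j v :=
      integrable_finsetSum J fun j _ =>
        integrable_of_eq_withDensity_ofReal (hf j).measurable (hf₀ j) (hν j)
    refine hdom.mono' hmeas.aestronglyMeasurable (ae_of_all _ fun v => ?_)
    have hprod_nonneg (j : ι) : 0 ≤ ∏ ℓ ∈ J.erase j, cdf (ν ℓ) v :=
      Finset.prod_nonneg fun ℓ _ => cdf_nonneg _ _
    have hprod_le_one (j : ι) : ∏ ℓ ∈ J.erase j, cdf (ν ℓ) v ≤ 1 :=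
      Finset.prod_le_one (fun ℓ _ => cdf_nonneg _ _) fun ℓ _ => cdf_le_one _ _
    rw [Real.norm_of_nonneg (Finset.sum_nonneg fun j _ => mul_nonneg (hf₀ j v) (hprod_nonneg j))]
    exact Finset.sum_le_sum fun j _ => mul_le_of_le_one_right (hf₀ j v) (hprod_le_one j)

lemma gaussianPDFReal_sq_toNNReal (m : ℝ) {σ : ℝ} (hσ : 0 < σ) (v : ℝ) :
    gaussianPDFReal m (σ ^ 2).toNNReal v = 1 / σ * stdGaussPDF ((v - m) / σ) := by
  rw [gaussianPDFReal, Real.coe_toNNReal _ (sq_nonneg σ), stdGaussPDF,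
    Real.sqrt_mul (by positivity), Real.sqrt_sq hσ.le]
  field_simp

lemma gaussianReal_map_standardize (m : ℝ) {σ : ℝ} (hσ : 0 < σ) :
    (gaussianReal m (σ ^ 2).toNNReal).map (fun x => (x - m) / σ) = gaussianReal 0 1 := by
  rw [show (fun x => (x - m) / σ) = (· / σ) ∘ (· - m) from rfl,
    ← Measure.map_map (by fun_prop) (by fun_prop), gaussianReal_map_sub_const,
    gaussianReal_map_div_const, sub_self, zero_div]
  congr
  ext
  simp [Real.coe_toNNReal _ (sq_nonneg σ), hσ.ne']

lemma cdf_gaussianReal_sq_toNNReal (m : ℝ) {σ : ℝ} (hσ : 0 < σ) (t : ℝ) :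
    cdf (gaussianReal m (σ ^ 2).toNNReal) t = stdGaussCDF ((t - m) / σ) := by
  have hpre : (fun x => (x - m) / σ) ⁻¹' Iic ((t - m) / σ) = Iic t := by
    ext x
    simp [div_le_div_iff_of_pos_right hσ]
  have h01 := gaussianReal_apply_eq_integral 0 one_ne_zero (Iic ((t - m) / σ))
  rw [← gaussianReal_map_standardize m hσ, Measure.map_apply (by fun_prop) measurableSet_Iic,
    hpre] at h01
  have hpdf : gaussianPDFReal 0 1 = stdGaussPDF := by
    funext x
    simpa using gaussianPDFReal_sq_toNNReal 0 one_pos x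
  rw [cdf_eq_real, measureReal_def, h01, hpdf, ENNReal.toReal_ofReal, stdGaussCDF]
  exact setIntegral_nonneg measurableSet_Iic fun x _ => by rw [stdGaussPDF]; positivity

theorem law_of_max_gaussian_general {s : ℕ} (μ σ : Fin s → ℝ) (hσ : ∀ j, 0 < σ j)
    (J : Finset (Fin s)) (hJne : J.Nonempty) :
    Measure.map (fun z : Fin s → ℝ => J.sup' hJne z)
        (Measure.pi fun i => gaussianReal (μ i) (Real.toNNReal ((σ i) ^ 2)))
      =
    volume.withDensity (fun v : ℝ => ENNReal.ofReal
      (∑ j ∈ J, (1 / σ j) * stdGaussPDF ((v - μ j) / σ j) *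
        ∏ ℓ ∈ J.erase j, stdGaussCDF ((v - μ ℓ) / σ ℓ))) := by
  have hvar (i : Fin s) : (σ i ^ 2).toNNReal ≠ 0 := by simpa using (hσ i).ne'
  simp_rw [← gaussianPDFReal_sq_toNNReal _ (hσ _), ← cdf_gaussianReal_sq_toNNReal _ (hσ _)]
  exact map_finset_sup'_pi_eq_withDensity _ _
    (fun i => by rw [gaussianPDFReal_def]; fun_prop) (fun i => gaussianPDFReal_nonneg _ _)
    (fun i => gaussianReal_of_var_ne_zero _ (hvar i)) J hJne

/-- Under the product Gaussian measure, the law of `max_{j∈J} z j` is Lebesgue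
measure with density `g(v) = ∑_{j∈J} (1/σ j) φ((v − μ j)/σ j) ∏_{ℓ∈J, ℓ≠j} Φ((v − μ ℓ)/σ ℓ)`. -/
theorem law_of_max_gaussian {s : ℕ} (hs : 1 ≤ s) (μ σ : Fin s → ℝ) (hσ : ∀ j, 0 < σ j)
    (J : Finset (Fin s)) (hJne : J.Nonempty) :
    Measure.map (fun z : Fin s → ℝ => J.sup' hJne z)
        (Measure.pi fun i => gaussianReal (μ i) (Real.toNNReal ((σ i) ^ 2)))
      =
    volume.withDensity (fun v : ℝ => ENNReal.ofReal
      (∑ j ∈ J, (1 / σ j) * stdGaussPDF ((v - μ j) / σ j) *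
        ∏ ℓ ∈ J.erase j, stdGaussCDF ((v - μ ℓ) / σ ℓ))) :=
  law_of_max_gaussian_general μ σ hσ J hJne
end

section
/- Let s and p be natural numbers with 0 < p < s, let sensor locations s_1, …, s_s ∈ ℝ² and a nonempty finite hypothesis set 𝓗 ⊂ ℝ² be given with ‖h − s_i‖ > 0 for all h ∈ 𝓗 and all i, and suppose that for each h ∈ 𝓗 the distances ‖h − s_1‖, …, ‖h − s_s‖ are pairwise distinct. For h ∈ 𝓗 set μ_i(h) = −10·log₁₀ ‖h − s_i‖ and let K(h) ⊆ Fin s be the set of indices of the p smallest distances ‖h − s_i‖. Let σ : Fin s → ℝ with σ_i > 0, and for each h let P_h be the product measure on Fin s → ℝ whose i-th factor is the real Gaussian measure with mean μ_i(h) and variance σ_i². Then the error probability P_e^{(p)} := 1 − (1/|𝓗|) ∑_{h∈𝓗} P_h({z | min_{i∈K(h)} z_i > max_{j∉K(h)} z_j}) satisfies P_e^{(p)} = 1 − (1/|𝓗|) ∑_{h∈𝓗} ∫_ℝ [∏_{i∈K(h)} (1 − Φ((v − μ_i(h))/σ_i))] · [∑_{j∉K(h)} (1/σ_j) φ((v −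 μ_j(h))/σ_j) ∏_{ℓ∉K(h), ℓ≠j} Φ((v − μ_ℓ(h))/σ_ℓ)] dv, where Φ and φ are the cumulative distribution function and density of the standard real Gaussian. -/
/-!
Split the event `max_{j ∉ K} z_j < min_{i ∈ K} z_i` according to the index `j ∉ K` attaining the
maximum. Two of these events meet only on a tie `z_j = z_j'`, which is null since the coordinates
are independent and atomless. Given `z_j = v`, the event asks `z_i > v` for `i ∈ K` and `z_ℓ ≤ v`
for the other `ℓ ∉ K`, which by independence has probability
`∏_{i∈K} (1 − Φ_i(v)) ∏_{ℓ∉K, ℓ≠j} Φ_ℓ(v)` with `Φ_i(v) = Φ((v − μ_i)/σ_i)`; integrating against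
the density of `z_j` and summing over `j` gives the formula.
-/

open MeasureTheory ProbabilityTheory

theorem measurableSet_setOf_forall_ne_mem {ι : Type*} [Countable ι] (j : ι)
    (S : ι → ℝ → Set ℝ) (hS : ∀ i, MeasurableSet {p : ℝ × ℝ | p.2 ∈ S i p.1}) :
    MeasurableSet {z : ι → ℝ | ∀ i ≠ j, z i ∈ S i (z j)} := by
  simp only [Set.ofPred_forall]
  exact .iInter fun i => .iInter fun _ => (hS i).preimage
    (f := fun z : ι → ℝ => (z j, z i)) (by fun_prop)

namespace MeasureTheory.Measure

variable {n : ℕ} (ν : Fin (n + 1) → Measure ℝ) [∀ i, SigmaFinite (ν i)]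

theorem pi_setOf_forall_ne_mem (j : Fin (n + 1)) (S : Fin (n + 1) → ℝ → Set ℝ)
    (hS : ∀ i, MeasurableSet {p : ℝ × ℝ | p.2 ∈ S i p.1}) :
    Measure.pi ν {z | ∀ i ≠ j, z i ∈ S i (z j)} = ∫⁻ x, ∏ i ∈ {j}ᶜ, ν i (S i x) ∂ν j := by
  set T : Set (ℝ × (Fin n → ℝ)) := {q | ∀ k, q.2 k ∈ S (j.succAbove k) q.1}
  have hT : MeasurableSet T := by
    simp only [T, Set.ofPred_forall]
    exact .iInter fun k => (hS (j.succAbove k)).preimage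
      (f := fun q : ℝ × (Fin n → ℝ) => (q.1, q.2 k)) (by fun_prop)
  have hpre : {z : Fin (n + 1) → ℝ | ∀ i ≠ j, z i ∈ S i (z j)}
      = MeasurableEquiv.piFinSuccAbove (fun _ => ℝ) j ⁻¹' T := by
    ext z
    simp [T, MeasurableEquiv.piFinSuccAbove, Fin.insertNthEquiv, Fin.removeNth,
      Fin.forall_iff_succAbove j, Fin.succAbove_ne]
  rw [hpre, (measurePreserving_piFinSuccAbove ν j).measure_preimage hT.nullMeasurableSet,
    Measure.prod_apply hT]
  refine lintegral_congr fun x => ?_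
  rw [show Prod.mk x ⁻¹' T = Set.univ.pi fun k => S (j.succAbove k) x by ext; simp [T],
    Measure.pi_pi, ← Fin.image_succAbove_univ, Finset.prod_image (g := j.succAbove)
      (f := fun i => ν i (S i x)) fun _ _ _ _ h => Fin.succAbove_right_injective h]

theorem pi_setOf_apply_eq_apply {i j : Fin (n + 1)} (hij : i ≠ j)
    [NullSingletonClass (ν i)] : Measure.pi ν {z | z i = z j} = 0 := by
  have hsub : {z : Fin (n + 1) → ℝ | z i = z j}
      ⊆ {z | ∀ l ≠ j, z l ∈ (if l = i then {z j} else Set.univ)} := by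
    intro z hz l _
    split_ifs with hl
    · exact hl ▸ hz
    · trivial
  refine measure_mono_null hsub ((pi_setOf_forall_ne_mem ν j
    (fun l x => if l = i then {x} else Set.univ) fun l => ?_).trans ?_)
  · split_ifs
    · exact measurableSet_diagonal.preimage measurable_swap
    · exact MeasurableSet.univ
  · refine (lintegral_congr fun x => Finset.prod_eq_zero (i := i) (by simpa using hij) ?_).trans
      lintegral_zero
    simp

theorem pi_setOf_sup'_lt_inf' [∀ i, NullSingletonClass (ν i)] (K : Finset (Fin (n + 1)))
    (hK : K.Nonempty) (hKc : Kᶜ.Nonempty) :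
    Measure.pi ν {z | Kᶜ.sup' hKc z < K.inf' hK z}
      = ∑ j ∈ Kᶜ, ∫⁻ x, (∏ i ∈ K, ν i (Set.Ioi x)) * ∏ l ∈ Kᶜ.erase j, ν l (Set.Iic x) ∂ν j := by
  set S : Fin (n + 1) → ℝ → Set ℝ := fun i x => if i ∈ K then Set.Ioi x else Set.Iic x
  have hS : ∀ i, MeasurableSet {p : ℝ × ℝ | p.2 ∈ S i p.1} := fun i => by
    by_cases hi : i ∈ K
    · simpa [S, hi] using measurableSet_lt measurable_fst measurable_snd
    · simpa [S, hi] using measurableSet_le measurable_snd measurable_fst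
  set A : Fin (n + 1) → Set (Fin (n + 1) → ℝ) := fun j => {z | ∀ i ≠ j, z i ∈ S i (z j)}
  have hunion : {z | Kᶜ.sup' hKc z < K.inf' hK z} = ⋃ j ∈ Kᶜ, A j := by
    ext z
    simp only [Set.mem_ofPred_eq, Set.mem_iUnion, exists_prop, A, S]
    constructor
    · intro hz
      obtain ⟨j, hj, hmax⟩ := Finset.exists_mem_eq_sup' hKc z
      refine ⟨j, hj, fun i _ => ?_⟩
      split_ifs with hi
      · exact hmax ▸ hz.trans_le (Finset.inf'_le z hi)
      · exact hmax ▸ Finset.le_sup' z (Finset.mem_compl.2 hi)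
    · rintro ⟨j, hj, hA⟩
      have hjK : j ∉ K := Finset.mem_compl.1 hj
      refine lt_of_le_of_lt (Finset.sup'_le hKc z fun l hl => ?_) ((Finset.lt_inf'_iff hK).2
        fun i hi => by simpa [hi] using hA i (ne_of_mem_of_not_mem hi hjK))
      rcases eq_or_ne l j with rfl | hlj
      · exact le_rfl
      · simpa [Finset.mem_compl.1 hl] using hA l hlj
  have hdisj :
      (↑Kᶜ : Set (Fin (n + 1))).Pairwise (Function.onFun (AEDisjoint (Measure.pi ν)) A) := by
    intro j hj j' hj' hne
    refine measure_mono_null (fun z ⟨hz, hz'⟩ => le_antisymm ?_ ?_)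
      (pi_setOf_apply_eq_apply ν hne.symm)
    · simpa [S, Finset.mem_compl.1 (Finset.mem_coe.1 hj')] using hz j' hne.symm
    · simpa [S, Finset.mem_compl.1 (Finset.mem_coe.1 hj)] using hz' j hne
  rw [hunion, measure_biUnion_finset₀ hdisj
    fun j _ => (measurableSet_setOf_forall_ne_mem j S hS).nullMeasurableSet]
  refine Finset.sum_congr rfl fun j hj => ?_
  rw [pi_setOf_forall_ne_mem ν j S hS]
  refine lintegral_congr fun x => ?_
  have hsplit : ({j}ᶜ : Finset (Fin (n + 1))) = K ∪ Kᶜ.erase j := by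
    ext i; by_cases i ∈ K <;> aesop
  rw [hsplit, Finset.prod_union (Finset.disjoint_left.2 fun i hi hi' => by simp_all)]
  congr 1
  · exact Finset.prod_congr rfl fun i hi => by simp [S, hi]
  · exact Finset.prod_congr rfl fun i hi => by simp_all [S]

end MeasureTheory.Measure

theorem stdGaussPDF_eq_gaussianPDFReal : stdGaussPDF = gaussianPDFReal 0 1 := by
  ext x
  simp [stdGaussPDF, gaussianPDFReal]

theorem stdGaussPDF_nonneg (u : ℝ) : 0 ≤ stdGaussPDF u :=
  stdGaussPDF_eq_gaussianPDFReal ▸ gaussianPDFReal_nonneg 0 1 u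

@[fun_prop]
theorem measurable_stdGaussPDF : Measurable stdGaussPDF :=
  stdGaussPDF_eq_gaussianPDFReal ▸ measurable_gaussianPDFReal 0 1

theorem stdGaussCDF_eq_cdf : stdGaussCDF = cdf (gaussianReal 0 1) := by
  ext t
  rw [cdf_eq_real, measureReal_def, gaussianReal_apply_eq_integral 0 one_ne_zero,
    ENNReal.toReal_ofReal (setIntegral_nonneg measurableSet_Iic fun u _ =>
      gaussianPDFReal_nonneg 0 1 u), ← stdGaussPDF_eq_gaussianPDFReal, stdGaussCDF]

theorem stdGaussCDF_nonneg (t : ℝ) : 0 ≤ stdGaussCDF t := stdGaussCDF_eq_cdf ▸ cdf_nonneg _ t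

theorem stdGaussCDF_le_one (t : ℝ) : stdGaussCDF t ≤ 1 := stdGaussCDF_eq_cdf ▸ cdf_le_one _ t

@[fun_prop]
theorem measurable_stdGaussCDF : Measurable stdGaussCDF :=
  stdGaussCDF_eq_cdf ▸ (monotone_cdf _).measurable

namespace ProbabilityTheory

variable (m : ℝ) {σ : ℝ}

theorem gaussianReal_sq_eq_map :
    gaussianReal m (σ ^ 2).toNNReal = (gaussianReal 0 1).map (fun u => σ * u + m) := by
  have hmul : (gaussianReal 0 1).map (σ * ·) = gaussianReal 0 (σ ^ 2).toNNReal := by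
    rw [gaussianReal_map_const_mul, mul_zero, mul_one, Real.toNNReal_of_nonneg (sq_nonneg σ)]
  rw [← zero_add m, ← gaussianReal_map_add_const, ← hmul,
    Measure.map_map (by fun_prop) (by fun_prop), zero_add]
  rfl

theorem gaussianReal_sq_Iic (hσ : 0 < σ) (t : ℝ) :
    gaussianReal m (σ ^ 2).toNNReal (Set.Iic t) = ENNReal.ofReal (stdGaussCDF ((t - m) / σ)) := by
  have hpre : (fun u => σ * u + m) ⁻¹' Set.Iic t = Set.Iic ((t - m) / σ) := by
    ext u
    simp only [Set.mem_preimage, Set.mem_Iic, le_div_iff₀ hσ]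
    constructor <;> intro h <;> linarith
  rw [gaussianReal_sq_eq_map, Measure.map_apply (by fun_prop) measurableSet_Iic, hpre,
    stdGaussCDF_eq_cdf, ofReal_cdf]

theorem gaussianReal_sq_Ioi (hσ : 0 < σ) (t : ℝ) :
    gaussianReal m (σ ^ 2).toNNReal (Set.Ioi t)
      = ENNReal.ofReal (1 - stdGaussCDF ((t - m) / σ)) := by
  rw [← Set.compl_Iic, prob_compl_eq_one_sub measurableSet_Iic, gaussianReal_sq_Iic m hσ,
    ENNReal.ofReal_sub _ (stdGaussCDF_nonneg _), ENNReal.ofReal_one]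

theorem gaussianPDFReal_sq (hσ : 0 < σ) (x : ℝ) :
    gaussianPDFReal m (σ ^ 2).toNNReal x = 1 / σ * stdGaussPDF ((x - m) / σ) := by
  rw [gaussianPDFReal, stdGaussPDF, Real.coe_toNNReal _ (sq_nonneg σ), mul_comm (2 * Real.pi),
    Real.sqrt_mul (sq_nonneg σ), Real.sqrt_sq hσ.le, div_pow]
  field_simp

theorem lintegral_gaussianReal_sq_ofReal (hσ : 0 < σ) (g : ℝ → ℝ) :
    ∫⁻ x, ENNReal.ofReal (g x) ∂gaussianReal m (σ ^ 2).toNNReal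
      = ∫⁻ x, ENNReal.ofReal (1 / σ * stdGaussPDF ((x - m) / σ) * g x) := by
  rw [gaussianReal_of_var_ne_zero _ (by simpa using hσ.ne'),
    lintegral_withDensity_eq_lintegral_mul_non_measurable _ (measurable_gaussianPDF _ _)
      (ae_of_all _ fun _ => gaussianPDF_lt_top)]
  refine lintegral_congr fun x => ?_
  rw [Pi.mul_apply, gaussianPDF, ← ENNReal.ofReal_mul (gaussianPDFReal_nonneg _ _ _),
    gaussianPDFReal_sq m hσ]

end ProbabilityTheory

theorem toReal_pi_gaussianReal_setOf_sup'_lt_inf' {n : ℕ} (K : Finset (Fin (n + 1)))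
    (hK : K.Nonempty) (hKc : Kᶜ.Nonempty) (μ σ : Fin (n + 1) → ℝ) (hσ : ∀ i, 0 < σ i) :
    ((Measure.pi fun i => gaussianReal (μ i) (σ i ^ 2).toNNReal)
        {z | K.inf' hK z > Kᶜ.sup' hKc z}).toReal
      = ∫ v, (∏ i ∈ K, (1 - stdGaussCDF ((v - μ i) / σ i))) *
          (∑ j ∈ Kᶜ, 1 / σ j * stdGaussPDF ((v - μ j) / σ j) *
            ∏ l ∈ Kᶜ.erase j, stdGaussCDF ((v - μ l) / σ l)) := by
  set ν : Fin (n + 1) → Measure ℝ := fun i => gaussianReal (μ i) (σ i ^ 2).toNNReal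
  have : ∀ i, NullSingletonClass (ν i) := fun i =>
    nullSingletonClass_gaussianReal (by simpa using (hσ i).ne')
  set F : Fin (n + 1) → ℝ → ℝ := fun i v => stdGaussCDF ((v - μ i) / σ i)
  set G : Fin (n + 1) → ℝ → ℝ := fun j v =>
    1 / σ j * stdGaussPDF ((v - μ j) / σ j) *
      ((∏ i ∈ K, (1 - F i v)) * ∏ l ∈ Kᶜ.erase j, F l v)
  have hF : ∀ i v, 0 ≤ F i v ∧ 0 ≤ 1 - F i v := fun i v =>
    ⟨stdGaussCDF_nonneg _, sub_nonneg.2 (stdGaussCDF_le_one _)⟩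
  have hG : ∀ j v, 0 ≤ G j v := fun j v =>
    mul_nonneg (mul_nonneg (one_div_nonneg.2 (hσ j).le) (stdGaussPDF_nonneg _))
      (mul_nonneg (Finset.prod_nonneg fun i _ => (hF i v).2)
        (Finset.prod_nonneg fun i _ => (hF i v).1))
  have hslice : ∀ j v, (∏ i ∈ K, ν i (Set.Ioi v)) * ∏ l ∈ Kᶜ.erase j, ν l (Set.Iic v)
      = ENNReal.ofReal ((∏ i ∈ K, (1 - F i v)) * ∏ l ∈ Kᶜ.erase j, F l v) := fun j v => by
    simp only [ν, gaussianReal_sq_Ioi _ (hσ _), gaussianReal_sq_Iic _ (hσ _),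
      ENNReal.ofReal_mul (Finset.prod_nonneg fun i _ => (hF i v).2),
      ENNReal.ofReal_prod_of_nonneg fun i _ => (hF i v).1,
      ENNReal.ofReal_prod_of_nonneg fun i _ => (hF i v).2, F]
  calc _ = (∑ j ∈ Kᶜ, ∫⁻ v, ENNReal.ofReal (G j v)).toReal := by
        simp only [gt_iff_lt, Measure.pi_setOf_sup'_lt_inf' ν K hK hKc, hslice, ν,
          lintegral_gaussianReal_sq_ofReal _ (hσ _), G]
    _ = (∫⁻ v, ENNReal.ofReal (∑ j ∈ Kᶜ, G j v)).toReal := by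
        rw [← lintegral_finsetSum' _ fun j _ => by fun_prop]
        simp only [ENNReal.ofReal_sum_of_nonneg fun j _ => hG j _]
    _ = ∫ v, ∑ j ∈ Kᶜ, G j v :=
        (integral_eq_lintegral_of_nonneg_ae (ae_of_all _ fun v => Finset.sum_nonneg
          fun j _ => hG j v) (by fun_prop)).symm
    _ = _ := by
        simp only [G, F, Finset.mul_sum]
        exact integral_congr_ae (ae_of_all _ fun v => Finset.sum_congr rfl fun j _ => by ring)

/-- Corollary 1: with `μ i (h) = −10 log₁₀ ‖h − s i‖` and `K h` the index set of
the `p` smallest distances, the top-`p` error probability under a uniform prior on `𝓗` equals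
`1 − (1/|𝓗|) ∑_{h∈𝓗} ∫ℝ [∏_{i∈K(h)}(1 − Φ((v−μ_i(h))/σ_i))]·
  [∑_{j∉K(h)}(1/σ_j)φ((v−μ_j(h))/σ_j)∏_{ℓ∉K(h),ℓ≠j}Φ((v−μ_ℓ(h))/σ_ℓ)] dv`. -/
theorem error_probability_top_p {s p : ℕ} (hp : 0 < p) (hps : p < s)
    (sloc : Fin s → EuclideanSpace ℝ (Fin 2))
    (𝓗 : Finset (EuclideanSpace ℝ (Fin 2)))
    (K : EuclideanSpace ℝ (Fin 2) → Finset (Fin s))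
    (hKcard : ∀ h, (K h).card = p)
    (σ : Fin s → ℝ) (hσ : ∀ i, 0 < σ i) :
    1 - (1 / (𝓗.card : ℝ)) * ∑ h ∈ 𝓗,
      ((Measure.pi fun i =>
          gaussianReal (-10 * Real.logb 10 ‖h - sloc i‖) (Real.toNNReal ((σ i) ^ 2)))
        {z : Fin s → ℝ |
          (K h).inf' (Finset.card_pos.mp (by rw [hKcard h]; exact hp)) z >
          ((K h)ᶜ).sup'
            (Finset.card_pos.mp
              (by rw [Finset.card_compl, hKcard h, Fintype.card_fin]; omega)) z}).toReal
      =
    1 - (1 / (𝓗.card : ℝ)) * ∑ h ∈ 𝓗,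
      ∫ v : ℝ,
        (∏ i ∈ K h,
          (1 - stdGaussCDF ((v - (-10 * Real.logb 10 ‖h - sloc i‖)) / σ i))) *
        (∑ j ∈ (K h)ᶜ, (1 / σ j) *
            stdGaussPDF ((v - (-10 * Real.logb 10 ‖h - sloc j‖)) / σ j) *
          ∏ ℓ ∈ ((K h)ᶜ).erase j,
            stdGaussCDF ((v - (-10 * Real.logb 10 ‖h - sloc ℓ‖)) / σ ℓ)) := by
  obtain ⟨n, rfl⟩ : ∃ n, s = n + 1 := ⟨s - 1, by omega⟩
  congr 2
  exact Finset.sum_congr rfl fun h _ => toReal_pi_gaussianReal_setOf_sup'_lt_inf' _ _ _ _ σ hσ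
end
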